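/- (Claim 10) Let k ≥ 3 and n ≥ 3 be integers, let A ⊆ [k]^n be a compressed set of the form A = B_{≥1} ∪ D with D ⊆ B_0 and |D| ≥ 2, and let s = max{m(x) : x ∈ D} (so s ≥ 2). Let T be the largest nonempty subset of {1,…,n} under the binary order for which C_T ∩ D ≠ ∅, where C_T = {x ∈ [k]^n : m(x) = s, R_s(x) = T, R_0(x) = ∅}. Then: (1) if T ≠ {1}, then d({1,…,s−1}^n) ⊆ d(A); (2) if T = {1}, then d({1,…,s−1}^n) \ {w} ⊆ d(A), where w is the point with w_1 = 0 and w_j = s−1 for all j ≥ 2. -/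

import Mathlib

open Finset
open scoped Classical

/-- `R_i(x)`: the set of coordinates of `x` equal to `i`.
The ambient alphabet is `[k+1] = {0,…,k}`. -/
noncomputable def rset {k N : ℕ} (x : Fin N → Fin (k + 1)) (i : ℕ) : Finset (Fin N) :=
  Finset.univ.filter fun j => (x j : ℕ) = i

/-- the strict binary order on finite sets of coordinates:
`X <_bin Y` iff `X ≠ Y` and `max (X Δ Y) ∈ Y`. -/
def binLT {N : ℕ} (X Y : Finset (Fin N)) : Prop :=
  ∃ m ∈ Y, m ∉ X ∧ ∀ j : Fin N, ((j ∈ X ∧ j ∉ Y) ∨ (j ∈ Y ∧ j ∉ X)) → j ≤ m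

/-- the strict `≤`-order on `[k+1]^N`: `x < y` iff `|R_0(x)| > |R_0(y)|`, or
`|R_0(x)| = |R_0(y)|` and for the largest `i` with `R_i(x) ≠ R_i(y)` we have
`max (R_i(x) Δ R_i(y)) ∈ R_i(y)`. -/
def plt {k N : ℕ} (x y : Fin N → Fin (k + 1)) : Prop :=
  (rset y 0).card < (rset x 0).card ∨
    ((rset x 0).card = (rset y 0).card ∧
      ∃ i : ℕ, binLT (rset x i) (rset y i) ∧ ∀ j : ℕ, i < j → rset x j = rset y j)

/-- the `≤`-order on `[k+1]^N`. -/
def ple {k N : ℕ} (x y : Fin N → Fin (k + 1)) : Prop := x = y ∨ plt x y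

/-- `B` is an initial segment of the `≤`-order. -/
def isInitSeg {k N : ℕ} (B : Finset (Fin N → Fin (k + 1))) : Prop :=
  ∀ y ∈ B, ∀ x, ple x y → x ∈ B

/-- the `d`-shadow: all points obtained from a point of `A` by flipping one
nonzero coordinate to `0`. -/
noncomputable def dShadow {k N : ℕ} (A : Finset (Fin N → Fin (k + 1))) :
    Finset (Fin N → Fin (k + 1)) :=
  A.biUnion fun x =>
    (Finset.univ.filter fun i => x i ≠ 0).image fun i => Function.update x i 0

/-- the initial segment of the `≤`-order on `[k+1]^N` of cardinality `m`. -/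
noncomputable def initSeg (k N m : ℕ) : Finset (Fin N → Fin (k + 1)) :=
  Finset.univ.filter fun x => (Finset.univ.filter fun y => ple y x).card ≤ m

/-- the `C_s`-compression of `A ⊆ [k+1]^(n+1)`: replace each slice
`A_{s,t} = {y : t_s y ∈ A}` by the initial segment of the same size. -/
noncomputable def compress {k n : ℕ} (s : Fin (n + 1)) (A : Finset (Fin (n + 1) → Fin (k + 1))) :
    Finset (Fin (n + 1) → Fin (k + 1)) :=
  Finset.univ.biUnion fun t : Fin (k + 1) =>
    (initSeg k n
        (Finset.univ.filter fun y : Fin n → Fin (k + 1) => s.insertNth t y ∈ A).card).image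
      fun y => s.insertNth t y

/-- `A` is compressed if every `C_s`-compression fixes it. -/
def IsCompressed {k n : ℕ} (A : Finset (Fin (n + 1) → Fin (k + 1))) : Prop :=
  ∀ s : Fin (n + 1), compress s A = A

/-- `B_r`: points with exactly `r` zero coordinates. -/
noncomputable def Bexact (k N r : ℕ) : Finset (Fin N → Fin (k + 1)) :=
  Finset.univ.filter fun x => (rset x 0).card = r

/-- `B_{≥r}`: points with at least `r` zero coordinates. -/
noncomputable def Bge (k N r : ℕ) : Finset (Fin N → Fin (k + 1)) :=
  Finset.univ.filter fun x => r ≤ (rset x 0).card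

/-- `m(x)`: the largest coordinate value of `x`. -/
noncomputable def mval {k N : ℕ} (x : Fin N → Fin (k + 1)) : ℕ :=
  Finset.univ.sup fun i => (x i : ℕ)

/-- the class `C_X`: points with maximal coordinate `s`, attained exactly on `X`,
and exactly `r` zero coordinates. -/
noncomputable def classSet (k N s r : ℕ) (X : Finset (Fin N)) : Finset (Fin N → Fin (k + 1)) :=
  Finset.univ.filter fun x => mval x = s ∧ rset x s = X ∧ (rset x 0).card = r

/-- `[m]^N = {0,…,m−1}^N`. -/
noncomputable def box (k N m : ℕ) : Finset (Fin N → Fin (k + 1)) :=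
  Finset.univ.filter fun x => ∀ i, (x i : ℕ) < m

/-- `{1,…,s−1}^N`. -/
noncomputable def box1 (k N s : ℕ) : Finset (Fin N → Fin (k + 1)) :=
  Finset.univ.filter fun x => ∀ i, 1 ≤ (x i : ℕ) ∧ (x i : ℕ) ≤ s - 1

/-- `B` is a down-set. -/
def isDownSet {k N : ℕ} (B : Finset (Fin N → Fin (k + 1))) : Prop :=
  ∀ y ∈ B, ∀ x : Fin N → Fin (k + 1), (∀ j, (x j : ℕ) ≤ (y j : ℕ)) → x ∈ B

/-!
Fix `x₀ ∈ C_T ∩ D`: it has no zero coordinate and maximum `s`, attained exactly on `T`.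
Since every slice of the compressed set `A` is an initial segment, a point that agrees with a
point of `A` at a coordinate `r` and is smaller in the `≤`-order off `r` lies in `A` as well.
For `z = x[i := 0]` with `x ∈ {1,…,s−1}^n` we find a nonzero `t` with `x[i := t] ∈ A`:
* if `x₀` attains `s` at some `p ≠ i`, then `x[i := x₀ i]` lies below `x₀` in the `i`-slice,
  since off `i` it has no coordinate `s`;
* if `T = {i}` and `s = 2`, then `x[i := x₀ i] = x₀`;
* if `T = {i}` and `s ≥ 3`, the previous step puts `b = (x₀ q at q, x r at r, s−1 elsewhere)`
  into `A`, and `x[i := 1]` lies below `b` in the `r`-slice as soon as `x q ≠ s−1` or `q < i`.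
  Such `q` and `r` exist unless `i` is the first coordinate and `x` is `s−1` off `i`, i.e. `z = w`.
-/

section Order

variable {k N : ℕ}

theorem mem_rset {x : Fin N → Fin (k + 1)} {i : ℕ} {j : Fin N} :
    j ∈ rset x i ↔ (x j : ℕ) = i := by
  simp [rset]

theorem mem_rset_removeNth {n : ℕ} {x : Fin (n + 1) → Fin (k + 1)} {r : Fin (n + 1)} {i : ℕ}
    {j : Fin n} : j ∈ rset (r.removeNth x) i ↔ (x (r.succAbove j) : ℕ) = i :=
  mem_rset

theorem rset_eq_empty_of_lt {x : Fin N → Fin (k + 1)} {L i : ℕ} (hx : ∀ j, (x j : ℕ) ≤ L)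
    (hi : L < i) : rset x i = ∅ :=
  eq_empty_of_forall_notMem fun j hj => by have := hx j; rw [mem_rset.1 hj] at this; omega

theorem binLT_of_forall_lt {X Y : Finset (Fin N)} {m : Fin N} (hmY : m ∈ Y) (hmX : m ∉ X)
    (h : ∀ j ∈ X, j ∉ Y → j < m) : binLT X Y := by
  have hm : m ∈ Y \ X := mem_sdiff.2 ⟨hmY, hmX⟩
  obtain ⟨hY, hX⟩ := mem_sdiff.1 ((Y \ X).max'_mem ⟨m, hm⟩)
  refine ⟨_, hY, hX, fun j hj => ?_⟩
  rcases hj with ⟨hjX, hjY⟩ | ⟨hjY, hjX⟩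
  · exact ((h j hjX hjY).trans_le (le_max' _ m hm)).le
  · exact le_max' _ j (mem_sdiff.2 ⟨hjY, hjX⟩)

theorem binLT_trans {X Y Z : Finset (Fin N)} (hXY : binLT X Y) (hYZ : binLT Y Z) :
    binLT X Z := by
  obtain ⟨m₁, hm₁Y, hm₁X, h₁⟩ := hXY
  obtain ⟨m₂, hm₂Z, hm₂Y, h₂⟩ := hYZ
  rcases le_or_gt m₁ m₂ with hle | hlt
  · have hm₂X : m₂ ∉ X := fun hm₂X =>
      hm₂Y (le_antisymm (h₁ m₂ (Or.inl ⟨hm₂X, hm₂Y⟩)) hle ▸ hm₁Y)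
    refine binLT_of_forall_lt hm₂Z hm₂X fun j hjX hjZ => ?_
    by_cases hjY : j ∈ Y
    · exact lt_of_le_of_ne (h₂ j (Or.inl ⟨hjY, hjZ⟩)) (by rintro rfl; exact hm₂Y hjY)
    · exact lt_of_le_of_ne ((h₁ j (Or.inl ⟨hjX, hjY⟩)).trans hle) (by rintro rfl; exact hm₂X hjX)
  · have hm₁Z : m₁ ∈ Z := by
      by_contra hm₁Z
      exact (h₂ m₁ (Or.inl ⟨hm₁Y, hm₁Z⟩)).not_gt hlt
    refine binLT_of_forall_lt hm₁Z hm₁X fun j hjX hjZ => ?_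
    by_cases hjY : j ∈ Y
    · exact (h₂ j (Or.inl ⟨hjY, hjZ⟩)).trans_lt hlt
    · exact lt_of_le_of_ne (h₁ j (Or.inl ⟨hjX, hjY⟩)) (by rintro rfl; exact hm₁X hjX)

theorem plt_trans {x y z : Fin N → Fin (k + 1)} (hxy : plt x y) (hyz : plt y z) : plt x z := by
  rcases hxy with hxy | ⟨exy, i, hi, hxyi⟩ <;> rcases hyz with hyz | ⟨eyz, j, hj, hyzj⟩
  · exact Or.inl (hyz.trans hxy)
  · exact Or.inl (eyz ▸ hxy)
  · exact Or.inl (exy ▸ hyz)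
  · refine Or.inr ⟨exy.trans eyz, ?_⟩
    rcases lt_trichotomy i j with hij | rfl | hji
    · exact ⟨j, hxyi j hij ▸ hj, fun l hl => (hxyi l (hij.trans hl)).trans (hyzj l hl)⟩
    · exact ⟨i, binLT_trans hi hj, fun l hl => (hxyi l hl).trans (hyzj l hl)⟩
    · exact ⟨i, (hyzj i hji).symm ▸ hi, fun l hl => (hxyi l hl).trans (hyzj l (hji.trans hl))⟩

theorem ple_trans {x y z : Fin N → Fin (k + 1)} (hxy : ple x y) (hyz : ple y z) : ple x z := by
  rcases hxy with rfl | hxy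
  · exact hyz
  rcases hyz with rfl | hyz
  · exact Or.inr hxy
  · exact Or.inr (plt_trans hxy hyz)

theorem plt_of_binLT_rset {x y : Fin N → Fin (k + 1)} (L : ℕ)
    (hx₀ : ∀ j, (x j : ℕ) ≠ 0) (hy₀ : ∀ j, (y j : ℕ) ≠ 0)
    (hxL : ∀ j, (x j : ℕ) ≤ L) (hyL : ∀ j, (y j : ℕ) ≤ L)
    (h : binLT (rset x L) (rset y L)) : plt x y := by
  have hempty : ∀ v : Fin N → Fin (k + 1), (∀ j, (v j : ℕ) ≠ 0) → rset v 0 = ∅ :=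
    fun v hv => eq_empty_of_forall_notMem fun j hj => hv j (mem_rset.1 hj)
  refine Or.inr ⟨by rw [hempty x hx₀, hempty y hy₀], L, h, fun i hi => ?_⟩
  rw [rset_eq_empty_of_lt hxL hi, rset_eq_empty_of_lt hyL hi]

end Order

section Compressed

variable {k n : ℕ} {A : Finset (Fin (n + 1) → Fin (k + 1))}

theorem IsCompressed.mem_of_ple_removeNth (hA : IsCompressed A)
    {b x : Fin (n + 1) → Fin (k + 1)} {r : Fin (n + 1)} (hb : b ∈ A) (hr : x r = b r)
    (hle : ple (r.removeNth x) (r.removeNth b)) : x ∈ A := by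
  rw [← hA r] at hb ⊢
  simp only [compress, mem_biUnion, mem_image, mem_univ, true_and] at hb ⊢
  obtain ⟨t, y, hy, rfl⟩ := hb
  rw [Fin.removeNth_insertNth] at hle
  rw [Fin.insertNth_apply_same] at hr
  refine ⟨t, r.removeNth x, ?_, hr ▸ Fin.insertNth_self_removeNth r x⟩
  simp only [initSeg, mem_filter, mem_univ, true_and] at hy ⊢
  refine le_trans (card_le_card fun u hu => ?_) hy
  simp only [mem_filter, mem_univ, true_and] at hu ⊢
  exact ple_trans hu hle

theorem IsCompressed.mem_of_binLT_rset_removeNth (hA : IsCompressed A)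
    {b x : Fin (n + 1) → Fin (k + 1)} {r : Fin (n + 1)} {L : ℕ} (hb : b ∈ A) (hr : x r = b r)
    (hxL : ∀ l, (x l : ℕ) ≠ 0 ∧ (x l : ℕ) ≤ L) (hbL : ∀ l, (b l : ℕ) ≠ 0 ∧ (b l : ℕ) ≤ L)
    (h : binLT (rset (r.removeNth x) L) (rset (r.removeNth b) L)) : x ∈ A :=
  hA.mem_of_ple_removeNth hb hr <| Or.inr <| plt_of_binLT_rset L (fun _ => (hxL _).1)
    (fun _ => (hbL _).1) (fun _ => (hxL _).2) (fun _ => (hbL _).2) h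

variable {s : ℕ} {x₀ : Fin (n + 1) → Fin (k + 1)}

theorem IsCompressed.mem_of_apply_eq_of_lt (hA : IsCompressed A) (hx₀A : x₀ ∈ A)
    (hx₀0 : ∀ l, (x₀ l : ℕ) ≠ 0) (hx₀s : ∀ l, (x₀ l : ℕ) ≤ s) {p q : Fin (n + 1)}
    (hp : (x₀ p : ℕ) = s) (hpq : p ≠ q) {y : Fin (n + 1) → Fin (k + 1)} (hyq : y q = x₀ q)
    (hy : ∀ l, l ≠ q → (y l : ℕ) ≠ 0 ∧ (y l : ℕ) < s) : y ∈ A := by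
  have hys : ∀ l, (y l : ℕ) ≠ 0 ∧ (y l : ℕ) ≤ s := fun l => by
    rcases eq_or_ne l q with rfl | hl
    · exact hyq ▸ ⟨hx₀0 l, hx₀s l⟩
    · exact ⟨(hy l hl).1, (hy l hl).2.le⟩
  refine hA.mem_of_binLT_rset_removeNth hx₀A hyq hys (fun l => ⟨hx₀0 l, hx₀s l⟩) ?_
  obtain ⟨p', hp'⟩ := Fin.exists_succAbove_eq hpq
  have hy' : ∀ j, (y (q.succAbove j) : ℕ) < s := fun j => (hy _ (Fin.succAbove_ne q j)).2
  refine binLT_of_forall_lt (m := p') (by rw [mem_rset_removeNth, hp', hp])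
    (fun h => (mem_rset_removeNth.1 h ▸ hy' p').false)
    fun j hj _ => absurd (mem_rset_removeNth.1 hj) (hy' j).ne

theorem IsCompressed.update_mem_of_rset_eq_singleton (hA : IsCompressed A) (hx₀A : x₀ ∈ A)
    (hx₀0 : ∀ l, (x₀ l : ℕ) ≠ 0) (hx₀s : ∀ l, (x₀ l : ℕ) ≤ s) {i : Fin (n + 1)}
    (hT : rset x₀ s = {i}) (hs : 3 ≤ s) {x : Fin (n + 1) → Fin (k + 1)}
    (hx : ∀ l, 1 ≤ (x l : ℕ) ∧ (x l : ℕ) ≤ s - 1) {t : Fin (k + 1)}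
    (ht : 1 ≤ (t : ℕ) ∧ (t : ℕ) < s - 1) {q r : Fin (n + 1)} (hqi : q ≠ i) (hri : r ≠ i)
    (hrq : r ≠ q) (hq : (x q : ℕ) ≠ s - 1 ∨ q < i) : Function.update x i t ∈ A := by
  have hx₀q : (x₀ q : ℕ) < s :=
    lt_of_le_of_ne (hx₀s q) fun h => hqi (mem_singleton.1 (hT ▸ mem_rset.2 h))
  have hx₀i : (x₀ i : ℕ) = s := mem_rset.1 (hT ▸ mem_singleton_self i)
  set c : Fin (k + 1) := ⟨s - 1, by have := (x₀ i).isLt; omega⟩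
  set b : Fin (n + 1) → Fin (k + 1) := fun l => if l = q then x₀ q else if l = r then x r else c
  have hb_val : ∀ l,
      (b l : ℕ) = if l = q then (x₀ q : ℕ) else if l = r then (x r : ℕ) else s - 1 :=
    fun l => by simp only [b]; split_ifs <;> rfl
  have hbL : ∀ l, (b l : ℕ) ≠ 0 ∧ (b l : ℕ) ≤ s - 1 := fun l => by
    have := hx₀0 q; have := hx r
    rw [hb_val]
    split_ifs <;> omega
  have hb : b ∈ A :=
    hA.mem_of_apply_eq_of_lt hx₀A hx₀0 hx₀s hx₀i (Ne.symm hqi) (if_pos rfl)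
      fun l _ => ⟨(hbL l).1, by have := (hbL l).2; omega⟩
  set y := Function.update x i t
  have hy : ∀ l, l ≠ i → y l = x l := fun l hl => Function.update_of_ne hl t x
  have hyi : y i = t := Function.update_self i t x
  have hyL : ∀ l, (y l : ℕ) ≠ 0 ∧ (y l : ℕ) ≤ s - 1 := fun l => by
    rcases eq_or_ne l i with rfl | hl
    · rw [hyi]; omega
    · rw [hy l hl]; have := hx l; omega
  refine hA.mem_of_binLT_rset_removeNth (r := r) hb (by simp [y, b, hri, hrq]) hyL hbL ?_
  obtain ⟨i', hi'⟩ := Fin.exists_succAbove_eq (Ne.symm hri)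
  refine binLT_of_forall_lt (m := i')
    (by rw [mem_rset_removeNth, hi', hb_val, if_neg (Ne.symm hqi), if_neg (Ne.symm hri)])
    (by rw [mem_rset_removeNth, hi', hyi]; omega) fun j hjy hjb => ?_
  rw [mem_rset_removeNth] at hjy hjb
  have hjq : r.succAbove j = q := by
    by_contra hjq
    exact hjb (by rw [hb_val, if_neg hjq, if_neg (Fin.succAbove_ne r j)])
  rw [hjq, hy q hqi] at hjy
  rw [← Fin.succAbove_lt_succAbove_iff (p := r), hjq, hi']
  exact hq.resolve_left (not_not.2 hjy)

end Compressed

section Shadow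

variable {k N : ℕ}

theorem mem_dShadow {B : Finset (Fin N → Fin (k + 1))} {z : Fin N → Fin (k + 1)} :
    z ∈ dShadow B ↔ ∃ x ∈ B, ∃ i, x i ≠ 0 ∧ Function.update x i 0 = z := by
  simp [dShadow]

theorem update_zero_mem_dShadow_of_update_mem {B : Finset (Fin N → Fin (k + 1))}
    {x : Fin N → Fin (k + 1)} {i : Fin N} {t : Fin (k + 1)} (ht : t ≠ 0)
    (h : Function.update x i t ∈ B) :
    Function.update x i 0 ∈ dShadow B :=
  mem_dShadow.2 ⟨_, h, i, by simpa, by simp⟩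

end Shadow

theorem IsCompressed.update_zero_mem_dShadow {k n s : ℕ}
    {A : Finset (Fin (n + 1) → Fin (k + 1))} (hA : IsCompressed A) (hn : 2 ≤ n)
    {x₀ : Fin (n + 1) → Fin (k + 1)} (hx₀A : x₀ ∈ A)
    (hx₀0 : ∀ l, (x₀ l : ℕ) ≠ 0) (hx₀s : ∀ l, (x₀ l : ℕ) ≤ s) {T : Finset (Fin (n + 1))}
    (hTne : T.Nonempty) (hT : rset x₀ s = T) {x : Fin (n + 1) → Fin (k + 1)}
    (hx : ∀ l, 1 ≤ (x l : ℕ) ∧ (x l : ℕ) ≤ s - 1) {i : Fin (n + 1)}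
    (hxi : T = {i} → (∃ q, q ≠ i ∧ (x q : ℕ) ≠ s - 1) ∨ i ≠ 0) :
    Function.update x i 0 ∈ dShadow A := by
  have hT' : ∀ l, l ∈ T ↔ (x₀ l : ℕ) = s := fun l => by rw [← hT, mem_rset]
  have hx₀i : x₀ i ≠ 0 := fun h => hx₀0 i (by rw [h, Fin.val_zero])
  by_cases hTi : T = {i}
  · have hx₀l : ∀ l, l ≠ i → (x₀ l : ℕ) < s := fun l hl =>
      lt_of_le_of_ne (hx₀s l) fun h => hl (by simpa [hTi] using (hT' l).2 h)
    rcases (show s ≤ 2 ∨ 3 ≤ s by omega) with hs | hs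
    · refine update_zero_mem_dShadow_of_update_mem hx₀i ?_
      convert hx₀A using 1
      refine Function.update_eq_iff.2 ⟨rfl, fun l hl => Fin.ext ?_⟩
      have := hx l; have := hx₀l l hl; have := hx₀0 l
      omega
    · obtain ⟨q, hqi, hq⟩ : ∃ q, q ≠ i ∧ ((x q : ℕ) ≠ s - 1 ∨ q < i) := by
        rcases hxi hTi with ⟨q, hqi, hq⟩ | hi0
        · exact ⟨q, hqi, Or.inl hq⟩
        · exact ⟨0, hi0.symm, Or.inr (Fin.pos_iff_ne_zero.2 hi0)⟩
      obtain ⟨r, hri, hrq⟩ := Fin.exists_ne_and_ne_of_two_lt i q (by omega)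
      have hsk : s ≤ k := (hT' i).1 (hTi ▸ mem_singleton_self i) ▸ Fin.is_le _
      refine update_zero_mem_dShadow_of_update_mem (t := ⟨1, by omega⟩)
        (Fin.ne_of_val_ne one_ne_zero) (hA.update_mem_of_rset_eq_singleton hx₀A hx₀0 hx₀s
          (hTi ▸ hT) hs hx ⟨le_rfl, show 1 < s - 1 by omega⟩ hqi hri hrq hq)
  · obtain ⟨p, hpT, hpi⟩ : ∃ p ∈ T, p ≠ i := by
      by_contra! h
      obtain ⟨p, hp⟩ := hTne
      exact hTi (eq_singleton_iff_unique_mem.2 ⟨h p hp ▸ hp, h⟩)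
    refine update_zero_mem_dShadow_of_update_mem hx₀i
      (hA.mem_of_apply_eq_of_lt hx₀A hx₀0 hx₀s ((hT' p).1 hpT) hpi (Function.update_self _ _ _)
        fun l hl => ?_)
    rw [Function.update_of_ne hl]
    have := hx l
    omega

theorem claim10_general (k n s : ℕ) (hn : 2 ≤ n)
    (A D : Finset (Fin (n + 1) → Fin (k + 1)))
    (hAeq : A = Bge k (n + 1) 1 ∪ D)
    (hA : IsCompressed A)
    (T : Finset (Fin (n + 1))) (hTne : T.Nonempty)
    (hT : (classSet k (n + 1) s 0 T ∩ D).Nonempty) :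
    (T ≠ {0} → dShadow (box1 k (n + 1) s) ⊆ dShadow A) ∧
    (T = {0} → ∀ z ∈ dShadow (box1 k (n + 1) s),
      z ≠ (fun j : Fin (n + 1) => if j = 0 then (0 : Fin (k + 1)) else (Fin.ofNat (k + 1) (s - 1))) →
        z ∈ dShadow A) := by
  obtain ⟨x₀, hx₀⟩ := hT
  obtain ⟨hx₀C, hx₀D⟩ := mem_inter.1 hx₀
  simp only [classSet, mem_filter, mem_univ, true_and, card_eq_zero] at hx₀C
  obtain ⟨hx₀m, hx₀T, hx₀0⟩ := hx₀C
  have hx₀s : ∀ l, (x₀ l : ℕ) ≤ s := fun l =>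
    hx₀m ▸ le_sup (f := fun j => (x₀ j : ℕ)) (mem_univ l)
  have key : ∀ x ∈ box1 k (n + 1) s, ∀ i, (T = {i} → (∃ q, q ≠ i ∧ (x q : ℕ) ≠ s - 1) ∨ i ≠ 0) →
      Function.update x i 0 ∈ dShadow A := fun x hx i =>
    hA.update_zero_mem_dShadow hn (hAeq ▸ mem_union_right _ hx₀D)
      (fun l h => eq_empty_iff_forall_notMem.1 hx₀0 l (mem_rset.2 h)) hx₀s hTne hx₀T
      (mem_filter.1 hx).2
  constructor
  · rintro hT0 z hz
    obtain ⟨x, hx, i, -, rfl⟩ := mem_dShadow.1 hz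
    exact key x hx i fun hTi => Or.inr (by rintro rfl; exact hT0 hTi)
  · rintro rfl z hz hzw
    obtain ⟨x, hx, i, -, rfl⟩ := mem_dShadow.1 hz
    refine key x hx i fun _ => ?_
    by_contra! hxw
    obtain ⟨hxtop, rfl⟩ := hxw
    refine hzw (funext fun j => ?_)
    rcases eq_or_ne j 0 with rfl | hj
    · simp
    · have hxj := hxtop j hj
      rw [Function.update_of_ne hj, if_neg hj]
      exact Fin.ext (by rw [Fin.val_ofNat, hxj, Nat.mod_eq_of_lt (hxj ▸ (x j).isLt)])

/-- **Claim 10.** Let `k ≥ 3`, `n ≥ 3`, let `A = B_{≥1} ∪ D ⊆ [k]^n` be compressed with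
`D ⊆ B_0`, `|D| ≥ 2`, and let `s = max {m(x) : x ∈ D}`. Let `T` be the largest nonempty
set under the binary order with `C_T ∩ D ≠ ∅`. Then (1) if `T ≠ {1}` then
`d({1,…,s−1}^n) ⊆ d(A)`, and (2) if `T = {1}` then
`d({1,…,s−1}^n) \ {w} ⊆ d(A)`, where `w = 0 ((n−1)·(s−1))`.
(Dimension `n ≥ 3` is rendered as `n + 1` with `n ≥ 2`; the first index is `0 : Fin (n+1)`;
alphabet `[k]` with `k ≥ 3` as `Fin (k+1)` with `k ≥ 2`.) -/
theorem claim10 (k n s : ℕ) (hk : 2 ≤ k) (hn : 2 ≤ n)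
    (A D : Finset (Fin (n + 1) → Fin (k + 1)))
    (hDsub : D ⊆ Bexact k (n + 1) 0) (hAeq : A = Bge k (n + 1) 1 ∪ D)
    (hDcard : 2 ≤ D.card) (hA : IsCompressed A)
    (hs1 : ∃ x ∈ D, mval x = s) (hs2 : ∀ x ∈ D, mval x ≤ s)
    (T : Finset (Fin (n + 1))) (hTne : T.Nonempty)
    (hT : (classSet k (n + 1) s 0 T ∩ D).Nonempty)
    (hTmax : ∀ S : Finset (Fin (n + 1)), S.Nonempty →
      (classSet k (n + 1) s 0 S ∩ D).Nonempty → S = T ∨ binLT S T) :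
    (T ≠ {0} → dShadow (box1 k (n + 1) s) ⊆ dShadow A) ∧
    (T = {0} → ∀ z ∈ dShadow (box1 k (n + 1) s),
      z ≠ (fun j : Fin (n + 1) => if j = 0 then (0 : Fin (k + 1)) else (Fin.ofNat (k + 1) (s - 1))) →
        z ∈ dShadow A) :=
  claim10_general k n s hn A D hAeq hA T hTne hT
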